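/- There exists a continuous function G : E → ℝ satisfying the kernel integral equation G(ξ,η) = G₀(ξ,η) + Φ_G(ξ,η) for all (ξ,η) ∈ E; namely, the successive approximations G_{n+1} := G₀ + Φ_{G_n} converge uniformly on E and their limit solves the equation. -/

import Mathlib

open MeasureTheory intervalIntegral

/-- The domain `E = {(ξ,η) : 0 ≤ η ≤ 1, η ≤ ξ ≤ 2-η}`. -/
def Eset : Set (ℝ × ℝ) := {q | 0 ≤ q.2 ∧ q.2 ≤ 1 ∧ q.2 ≤ q.1 ∧ q.1 ≤ 2 - q.2}

/-- `μ̃(ξ,η) = λ₀ - c₁((ξ+η)/2) + c₁((ξ-η)/2)`. -/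
noncomputable def muT (c1 : ℝ → ℝ) (lam0 ξ η : ℝ) : ℝ :=
  lam0 - c1 ((ξ + η) / 2) + c1 ((ξ - η) / 2)

/-- The integral operator `Φ_H` of the kernel integral equation. -/
noncomputable def PhiOp (c1 : ℝ → ℝ) (lam0 : ℝ) (f : ℝ → ℝ → ℝ) (H : ℝ → ℝ → ℝ)
    (ξ η : ℝ) : ℝ :=
  (1 / 4) * (∫ τ in η..ξ, ∫ s in (0:ℝ)..η, muT c1 lam0 τ s * H τ s)
    + (1 / 2) * (∫ τ in (0:ℝ)..η, ∫ s in (0:ℝ)..τ, muT c1 lam0 τ s * H τ s)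
    + (1 / 4) * (∫ z in η..ξ, ∫ s in (0:ℝ)..η, ∫ τ in z..(z + η - s),
        f ((τ - s) / 2) (z - (τ + s) / 2) * H τ s)
    + (1 / 2) * (∫ z in (0:ℝ)..η, ∫ s in (0:ℝ)..z, ∫ τ in z..(2 * z - s),
        f ((τ - s) / 2) (z - (τ + s) / 2) * H τ s)

/-- The inhomogeneous term `G₀` of the kernel integral equation. -/
noncomputable def Gzero (lam0 : ℝ) (f : ℝ → ℝ → ℝ) (ξ η : ℝ) : ℝ :=
  lam0 / 4 * (ξ + η)
    + (1 / 4) * (∫ τ in η..ξ, ∫ s in (0:ℝ)..η, f ((τ + s) / 2) ((τ - s) / 2))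
    + (1 / 2) * (∫ τ in (0:ℝ)..η, ∫ s in (0:ℝ)..τ, f ((τ + s) / 2) ((τ - s) / 2))

/-! Bielecki's method. Writing `G = e^{Kη} u`, the map `G ↦ G₀ + Φ_G` becomes a self-map of
`C(E)` with Lipschitz constant at most `(sup |μ̃| + sup |f|) / (2K)`: in every term of `Φ_G` the
variable `s` runs over `[0, η]` against the weight `e^{Ks}`, which gains a factor `1/K`, while the
remaining integration ranges are short. For large `K` this is a contraction, and its fixed point
is the solution. On `E`, `c₁` is only evaluated on `[0, 1]`, so it may be replaced by a bounded
continuous extension. -/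

open Set Real

@[fun_prop]
theorem continuous_parametric_intervalIntegral_of_continuous_bounds {X : Type*}
    [TopologicalSpace X] {F : X → ℝ → ℝ} (hF : Continuous fun p : X × ℝ => F p.1 p.2)
    {a b : X → ℝ} (ha : Continuous a) (hb : Continuous b) :
    Continuous fun x => ∫ t in a x..b x, F x t := by
  have hi (x : X) (u v : ℝ) : IntervalIntegrable (F x) volume u v :=
    (hF.uncurry_left x).intervalIntegrable u v
  refine ((continuous_parametric_intervalIntegral_of_continuous (μ := volume) (a₀ := 0) hF hb).sub
    (continuous_parametric_intervalIntegral_of_continuous (μ := volume) (a₀ := 0) hF ha)).congr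
    fun x => ?_
  exact integral_interval_sub_left (hi x 0 (b x)) (hi x 0 (a x))

theorem abs_integral_le_of_abs_le_mul_exp {g : ℝ → ℝ} {c K a : ℝ} (hc : 0 ≤ c) (hK : 0 < K)
    (ha : 0 ≤ a) (hg : ∀ s ∈ Ioc 0 a, |g s| ≤ c * exp (K * s)) :
    |∫ s in 0..a, g s| ≤ c * exp (K * a) / K := by
  have hexp : ∫ s in 0..a, c * exp (K * s) = c * (exp (K * a) - 1) / K := by
    rw [intervalIntegral.integral_const_mul,
      intervalIntegral.integral_comp_mul_left (fun s => exp s) hK.ne', integral_exp]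
    simp only [mul_zero, exp_zero, smul_eq_mul]
    field_simp
  calc |∫ s in 0..a, g s| ≤ ∫ s in 0..a, c * exp (K * s) :=
        intervalIntegral.norm_integral_le_of_norm_le ha
          (ae_of_all _ fun s hs => (Real.norm_eq_abs _).trans_le (hg s hs))
          ((by fun_prop : Continuous fun s => c * exp (K * s)).intervalIntegrable _ _)
    _ = c * (exp (K * a) - 1) / K := hexp
    _ ≤ c * exp (K * a) / K := by gcongr; linarith

theorem abs_integral_le_of_abs_le_const {g : ℝ → ℝ} {C a b : ℝ} (hab : a ≤ b)
    (hg : ∀ x ∈ Ioc a b, |g x| ≤ C) : |∫ x in a..b, g x| ≤ C * (b - a) := by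
  have h := intervalIntegral.norm_integral_le_of_norm_le_const (a := a) (b := b) (f := g)
    (by simpa only [uIoc_of_le hab, Real.norm_eq_abs] using hg)
  rwa [Real.norm_eq_abs, abs_of_nonneg (sub_nonneg.2 hab)] at h

theorem abs_integral_integral_rect_le {g : ℝ → ℝ → ℝ} {c K a b η : ℝ} (hc : 0 ≤ c)
    (hK : 0 < K) (hη : 0 ≤ η) (hab : a ≤ b)
    (hg : ∀ τ ∈ Ioc a b, ∀ s ∈ Ioc 0 η, |g τ s| ≤ c * exp (K * s)) :
    |∫ τ in a..b, ∫ s in 0..η, g τ s| ≤ c * exp (K * η) / K * (b - a) :=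
  abs_integral_le_of_abs_le_const hab fun τ hτ =>
    abs_integral_le_of_abs_le_mul_exp hc hK hη (hg τ hτ)

theorem abs_integral_integral_triangle_le {g : ℝ → ℝ → ℝ} {c K η : ℝ} (hc : 0 ≤ c)
    (hK : 0 < K) (hη : 0 ≤ η)
    (hg : ∀ τ ∈ Ioc 0 η, ∀ s ∈ Ioc 0 τ, |g τ s| ≤ c * exp (K * s)) :
    |∫ τ in 0..η, ∫ s in 0..τ, g τ s| ≤ c * exp (K * η) / K * η := by
  simpa only [sub_zero] using abs_integral_le_of_abs_le_const hη fun τ hτ =>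
    (abs_integral_le_of_abs_le_mul_exp hc hK hτ.1.le (hg τ hτ)).trans <| by gcongr; exact hτ.2

theorem ContinuousOn.exists_continuous_bounded_eqOn_Icc {g : ℝ → ℝ} {a b : ℝ} (hab : a ≤ b)
    (hg : ContinuousOn g (Icc a b)) :
    ∃ c : ℝ → ℝ, Continuous c ∧ (∃ B, ∀ x, |c x| ≤ B) ∧ EqOn c g (Icc a b) := by
  obtain ⟨B, hB⟩ := isCompact_Icc.exists_bound_of_continuousOn hg
  exact ⟨IccExtend hab ((Icc a b).domRestrict g), continuous_IccExtend_iff.2 hg.domRestrict,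
    ⟨B, fun x => hB _ (projIcc a b hab x).2⟩, fun x hx => IccExtend_of_mem _ _ hx⟩

theorem abs_muT_le {c : ℝ → ℝ} {B : ℝ} (hB : ∀ x, |c x| ≤ B) (lam0 x y : ℝ) :
    |muT c lam0 x y| ≤ |lam0| + 2 * B := by
  have h₁ := abs_le.1 (hB ((x + y) / 2))
  have h₂ := abs_le.1 (hB ((x - y) / 2))
  have h₃ := abs_le.1 (le_refl |lam0|)
  rw [muT, abs_le]
  constructor <;> linarith

theorem muT_congr {c c' : ℝ → ℝ} (h : EqOn c c' (Icc 0 1)) (lam0 : ℝ) {τ s : ℝ} (hs : 0 ≤ s)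
    (hsτ : s ≤ τ) (hτs : τ + s ≤ 2) : muT c lam0 τ s = muT c' lam0 τ s := by
  rw [muT, muT, h (show (τ + s) / 2 ∈ Icc 0 1 from ⟨by linarith, by linarith⟩),
    h (show (τ - s) / 2 ∈ Icc 0 1 from ⟨by linarith, by linarith⟩)]

theorem PhiOp_congr_of_eqOn {c c' : ℝ → ℝ} (h : EqOn c c' (Icc 0 1)) (lam0 : ℝ)
    (f H : ℝ → ℝ → ℝ) {ξ η : ℝ} (hq : (ξ, η) ∈ Eset) :
    PhiOp c lam0 f H ξ η = PhiOp c' lam0 f H ξ η := by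
  obtain ⟨h0, h1, h2, h3⟩ : 0 ≤ η ∧ η ≤ 1 ∧ η ≤ ξ ∧ ξ ≤ 2 - η := hq
  unfold PhiOp
  congr 4
  · refine intervalIntegral.integral_congr fun τ hτ => intervalIntegral.integral_congr
      fun s hs => ?_
    rw [uIcc_of_le h2] at hτ
    rw [uIcc_of_le h0] at hs
    simp only [muT_congr h lam0 hs.1 (hs.2.trans hτ.1) (by linarith [hs.2, hτ.2])]
  · refine intervalIntegral.integral_congr fun τ hτ => intervalIntegral.integral_congr
      fun s hs => ?_
    rw [uIcc_of_le h0] at hτ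
    rw [uIcc_of_le hτ.1] at hs
    simp only [muT_congr h lam0 hs.1 hs.2 (by linarith [hs.2, hτ.2])]

theorem continuous_muT {c : ℝ → ℝ} (hc : Continuous c) (lam0 : ℝ) :
    Continuous fun q : ℝ × ℝ => muT c lam0 q.1 q.2 := by
  unfold muT; fun_prop

theorem continuous_Gzero (lam0 : ℝ) {f : ℝ → ℝ → ℝ}
    (hf : Continuous fun q : ℝ × ℝ => f q.1 q.2) :
    Continuous fun q : ℝ × ℝ => Gzero lam0 f q.1 q.2 := by
  unfold Gzero; fun_prop

section PhiOp

variable {c : ℝ → ℝ} {lam0 : ℝ} {f : ℝ → ℝ → ℝ}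

theorem continuous_PhiOp (hc : Continuous c) (hf : Continuous fun q : ℝ × ℝ => f q.1 q.2)
    {H : ℝ → ℝ → ℝ} (hH : Continuous fun q : ℝ × ℝ => H q.1 q.2) :
    Continuous fun q : ℝ × ℝ => PhiOp c lam0 f H q.1 q.2 := by
  have := continuous_muT hc lam0
  unfold PhiOp; fun_prop

theorem PhiOp_sub (hc : Continuous c) (hf : Continuous fun q : ℝ × ℝ => f q.1 q.2)
    {H₁ H₂ : ℝ → ℝ → ℝ} (hH₁ : Continuous fun q : ℝ × ℝ => H₁ q.1 q.2)
    (hH₂ : Continuous fun q : ℝ × ℝ => H₂ q.1 q.2) (ξ η : ℝ) :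
    PhiOp c lam0 f (fun x y => H₁ x y - H₂ x y) ξ η
      = PhiOp c lam0 f H₁ ξ η - PhiOp c lam0 f H₂ ξ η := by
  have := continuous_muT hc lam0
  unfold PhiOp
  simp (disch := (apply Continuous.intervalIntegrable; fun_prop)) only
    [mul_sub, intervalIntegral.integral_sub]
  ring

theorem abs_PhiOp_le {D : ℝ → ℝ → ℝ} {M F C K ξ η : ℝ}
    (hM : ∀ x y, |muT c lam0 x y| ≤ M) (hF : ∀ x y, |f x y| ≤ F)
    (hD : ∀ x y, |D x y| ≤ C * exp (K * y)) (hC : 0 ≤ C) (hK : 0 < K) (hq : (ξ, η) ∈ Eset) :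
    |PhiOp c lam0 f D ξ η| ≤ (M + F) / (2 * K) * (C * exp (K * η)) := by
  obtain ⟨h0, h1, h2, h3⟩ : 0 ≤ η ∧ η ≤ 1 ∧ η ≤ ξ ∧ ξ ≤ 2 - η := hq
  have hM0 : 0 ≤ M := (abs_nonneg _).trans (hM 0 0)
  have hF0 : 0 ≤ F := (abs_nonneg _).trans (hF 0 0)
  have hμD (τ s : ℝ) : |muT c lam0 τ s * D τ s| ≤ M * C * exp (K * s) := by
    rw [abs_mul, mul_assoc]; exact mul_le_mul (hM τ s) (hD τ s) (abs_nonneg _) hM0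
  have hfD (z s b : ℝ) (hzb : z ≤ b) (hbz : b ≤ z + 1) :
      |∫ τ in z..b, f ((τ - s) / 2) (z - (τ + s) / 2) * D τ s| ≤ F * C * exp (K * s) := by
    refine (abs_integral_le_of_abs_le_const hzb fun τ _ => ?_).trans
      (mul_le_of_le_one_right (by positivity) (by linarith))
    rw [abs_mul, mul_assoc]; exact mul_le_mul (hF _ _) (hD τ s) (abs_nonneg _) hF0
  have t₁ := abs_integral_integral_rect_le (by positivity) hK h0 h2 fun τ _ s _ => hμD τ s
  have t₂ := abs_integral_integral_triangle_le (by positivity) hK h0 fun τ _ s _ => hμD τ s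
  have t₃ := abs_integral_integral_rect_le (by positivity) hK h0 h2 fun z _ s hs =>
    hfD z s (z + η - s) (by linarith [hs.2]) (by linarith [hs.1])
  have t₄ := abs_integral_integral_triangle_le (by positivity) hK h0 fun z hz s hs =>
    hfD z s (2 * z - s) (by linarith [hs.2]) (by linarith [hs.1, hz.2])
  have hw : (ξ - η) / 4 + η / 2 ≤ 1 / 2 := by linarith
  have hwM := mul_le_mul_of_nonneg_left hw (by positivity : 0 ≤ M * C * exp (K * η) / K)
  have hwF := mul_le_mul_of_nonneg_left hw (by positivity : 0 ≤ F * C * exp (K * η) / K)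
  have hsplit : (M + F) / (2 * K) * (C * exp (K * η))
      = (M * C * exp (K * η) / K + F * C * exp (K * η) / K) / 2 := by
    field_simp
  rw [abs_le] at t₁ t₂ t₃ t₄
  rw [hsplit, PhiOp, abs_le]
  constructor <;> linarith [t₁.1, t₁.2, t₂.1, t₂.2, t₃.1, t₃.2, t₄.1, t₄.2]

end PhiOp

theorem isCompact_Eset : IsCompact Eset := by
  refine (isCompact_Icc (a := ((0 : ℝ), (0 : ℝ))) (b := (2, 1))).of_isClosed_subset ?_ ?_
  · exact (isClosed_le continuous_const continuous_snd).inter <|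
      (isClosed_le continuous_snd continuous_const).inter <|
      (isClosed_le continuous_snd continuous_fst).inter
      (isClosed_le continuous_fst (continuous_const.sub continuous_snd))
  · rintro ⟨ξ, η⟩ ⟨h0, h1, h2, h3⟩
    exact ⟨⟨h0.trans h2, h0⟩, ⟨h3.trans (sub_le_self 2 h0), h1⟩⟩

instance : CompactSpace Eset := isCompact_iff_compactSpace.mp isCompact_Eset

noncomputable def retractE : C(ℝ × ℝ, Eset) where
  toFun p :=
    let y := projIcc (0 : ℝ) 1 zero_le_one p.2
    ⟨(max y (min (2 - y) p.1), y),
      y.2.1, y.2.2, le_max_left _ _, max_le (by linarith [y.2.2]) (min_le_left _ _)⟩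
  continuous_toFun := by fun_prop

theorem retractE_of_mem {q : ℝ × ℝ} (hq : q ∈ Eset) : retractE q = ⟨q, hq⟩ := by
  obtain ⟨h0, h1, h2, h3⟩ := hq
  ext
  · simp [retractE, projIcc_of_mem zero_le_one ⟨h0, h1⟩, h2, h3]
  · simp [retractE, projIcc_of_mem zero_le_one ⟨h0, h1⟩]

section Bielecki

variable (K : ℝ)

/-- The weighted sup norm `sup_E e^{-Kη} |G|` is realised as the sup norm of `u`; off `E` the
function is continued through `retractE`. -/
noncomputable def expWeighted (u : C(Eset, ℝ)) (ξ η : ℝ) : ℝ :=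
  exp (K * η) * u (retractE (ξ, η))

theorem continuous_expWeighted (u : C(Eset, ℝ)) :
    Continuous fun q : ℝ × ℝ => expWeighted K u q.1 q.2 := by
  unfold expWeighted; fun_prop

theorem abs_expWeighted_sub_le (u v : C(Eset, ℝ)) (x y : ℝ) :
    |expWeighted K u x y - expWeighted K v x y| ≤ dist u v * exp (K * y) := by
  rw [expWeighted, expWeighted, ← mul_sub, abs_mul, abs_of_pos (exp_pos _), mul_comm,
    ← Real.dist_eq]
  exact mul_le_mul_of_nonneg_right (ContinuousMap.dist_apply_le_dist (f := u) (g := v) _)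
    (exp_pos _).le

variable {c : ℝ → ℝ} {f : ℝ → ℝ → ℝ} (lam0 : ℝ)

noncomputable def picard (hc : Continuous c) (hf : Continuous fun q : ℝ × ℝ => f q.1 q.2)
    (u : C(Eset, ℝ)) : C(Eset, ℝ) where
  toFun p := exp (-(K * p.1.2)) *
    (Gzero lam0 f p.1.1 p.1.2 + PhiOp c lam0 f (expWeighted K u) p.1.1 p.1.2)
  continuous_toFun := by
    have := continuous_Gzero lam0 hf
    have := continuous_PhiOp hc hf (lam0 := lam0) (continuous_expWeighted K u)
    fun_prop

variable (hc : Continuous c) (hf : Continuous fun q : ℝ × ℝ => f q.1 q.2)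

theorem dist_picard_le {M F : ℝ} (hM : ∀ x y, |muT c lam0 x y| ≤ M)
    (hF : ∀ x y, |f x y| ≤ F) (hK : 0 < K) (u v : C(Eset, ℝ)) :
    dist (picard K lam0 hc hf u) (picard K lam0 hc hf v) ≤ (M + F) / (2 * K) * dist u v := by
  have hMF : 0 ≤ M + F :=
    add_nonneg ((abs_nonneg _).trans (hM 0 0)) ((abs_nonneg _).trans (hF 0 0))
  refine (ContinuousMap.dist_le (by positivity)).2 fun ⟨⟨ξ, η⟩, hq⟩ => ?_
  have hΦ := abs_PhiOp_le hM hF (abs_expWeighted_sub_le K u v) dist_nonneg hK hq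
  rw [PhiOp_sub hc hf (continuous_expWeighted K u) (continuous_expWeighted K v)] at hΦ
  calc _ = exp (-(K * η)) * |PhiOp c lam0 f (expWeighted K u) ξ η
              - PhiOp c lam0 f (expWeighted K v) ξ η| := by
        simp only [Real.dist_eq, picard, ContinuousMap.coe_mk]
        rw [← mul_sub, add_sub_add_left_eq_sub, abs_mul, abs_of_pos (exp_pos _)]
    _ ≤ exp (-(K * η)) * ((M + F) / (2 * K) * (dist u v * exp (K * η))) := by gcongr
    _ = (M + F) / (2 * K) * dist u v := by
        rw [exp_neg]; field_simp

theorem contractingWith_picard {M F : ℝ} (hM : ∀ x y, |muT c lam0 x y| ≤ M)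
    (hF : ∀ x y, |f x y| ≤ F) (hK : 0 < K) (hMF : M + F ≤ K) :
    ContractingWith (1 / 2) (picard K lam0 hc hf) := by
  refine ⟨by norm_num, LipschitzWith.of_dist_le_mul fun u v =>
    (dist_picard_le K lam0 hc hf hM hF hK u v).trans ?_⟩
  gcongr
  rw [NNReal.coe_div, NNReal.coe_one, NNReal.coe_two, div_le_div_iff₀ (by positivity) two_pos]
  linarith

theorem expWeighted_eq_of_isFixedPt {u : C(Eset, ℝ)} (hu : picard K lam0 hc hf u = u) {ξ η : ℝ}
    (hq : (ξ, η) ∈ Eset) :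
    expWeighted K u ξ η = Gzero lam0 f ξ η + PhiOp c lam0 f (expWeighted K u) ξ η := by
  have h := DFunLike.congr_fun hu ⟨(ξ, η), hq⟩
  simp only [picard, ContinuousMap.coe_mk] at h
  rw [expWeighted, retractE_of_mem hq, ← h, ← mul_assoc, ← exp_add, add_neg_cancel, exp_zero,
    one_mul]

end Bielecki

theorem stmt15 (c1 : ℝ → ℝ) (lam0 : ℝ) (f : ℝ → ℝ → ℝ)
    (hc1 : ContDiffOn ℝ 1 c1 (Set.Icc 0 1))
    (hfc : Continuous (fun q : ℝ × ℝ => f q.1 q.2))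
    (hfbdd : ∃ C : ℝ, ∀ x y : ℝ, |f x y| ≤ C) :
    ∃ G : ℝ → ℝ → ℝ,
      ContinuousOn (fun q : ℝ × ℝ => G q.1 q.2) Eset ∧
      ∀ ξ η : ℝ, (ξ, η) ∈ Eset → G ξ η = Gzero lam0 f ξ η + PhiOp c1 lam0 f G ξ η := by
  obtain ⟨F, hF⟩ := hfbdd
  obtain ⟨c, hc, ⟨B, hB⟩, hcc1⟩ :=
    hc1.continuousOn.exists_continuous_bounded_eqOn_Icc zero_le_one
  set K := max (|lam0| + 2 * B + F) 1
  have hT : ContractingWith (1 / 2) (picard K lam0 hc hfc) :=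
    contractingWith_picard K lam0 hc hfc (abs_muT_le hB lam0) hF
      (zero_lt_one.trans_le (le_max_right _ _)) (le_max_left _ _)
  refine ⟨expWeighted K (ContractingWith.fixedPoint _ hT),
    (continuous_expWeighted K _).continuousOn, fun ξ η hq => ?_⟩
  rw [← PhiOp_congr_of_eqOn hcc1 lam0 f _ hq]
  exact expWeighted_eq_of_isFixedPt K lam0 hc hfc (ContractingWith.fixedPoint_isFixedPt hT) hq
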